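/- Let A be a complex Banach algebra with identity and let a, b, c ∈ A. Suppose a is Hirano invertible, cb is strongly Drazin invertible with strongly Drazin inverse (cb)^D, acb = cba, and (cb)^D a = 0. Then the 2×2 matrix with rows (a, c) and (b, 0) is Hirano invertible in M₂(A). -/

import Mathlib

/-!
An element `a` of a ring is Hirano invertible iff `a - a ^ 3` is nilpotent. All data in such
statements commute, so they can be checked in a commutative subring modulo its nilradical, where
`a ^ 3 = a`, and idempotents and units lift back along the nil kernel.

For `M = !![a, c; b, 0]` one has `M - M ^ 3 = L * N` with `L = !![1, 0; 0, b]`, and `N * L` has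
entries in the commutative subring generated by `a` and `d = c * b`. Since `x * y` is nilpotent iff
`y * x` is, it suffices that `N * L` is nilpotent; by Cayley–Hamilton this follows from nilpotency
of its trace and determinant, which come from `a - a ^ 3`, `d - d ^ 2` and `a * d` being nilpotent.
The last holds because `(c * b)ᴰ * a = 0` makes `d` act on `a` through its nilpotent part.
-/

/-- An element of a ring is *Hirano invertible* if there exists `x` with
`a * x = x * a`, `x = x * a * x`, and `a ^ 2 - a * x` nilpotent. -/
def IsHirano {R : Type*} [Ring R] (a : R) : Prop :=
  ∃ x : R, a * x = x * a ∧ x = x * a * x ∧ IsNilpotent (a ^ 2 - a * x)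

/-- `y` is the *strongly Drazin inverse* of `b`: `b * y = y * b`, `y = y * b * y`,
and `b - b * y` is nilpotent. -/
def IsSDrazinInv {R : Type*} [Ring R] (b y : R) : Prop :=
  b * y = y * b ∧ y = y * b * y ∧ IsNilpotent (b - b * y)

/-- With `M = !![a, c; b, 0]`, `M - M ^ 3 = !![1, 0; 0, b] * N` for an explicit `N`, and
`N * !![1, 0; 0, b]` is this matrix at `d = c * b`. -/
def antiTriangularDefect {A : Type*} [Ring A] (a d : A) : Matrix (Fin 2) (Fin 2) A :=
  !![a - a ^ 3 - (a * d + d * a), (1 - a ^ 2 - d) * d; 1 - a ^ 2 - d, -(a * d)]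

section CommRing

variable {R : Type*} [CommRing R]

theorem isNilpotent_iff_mk_nilradical_eq_zero {z : R} :
    IsNilpotent z ↔ Ideal.Quotient.mk (nilradical R) z = 0 := by
  rw [Ideal.Quotient.eq_zero_iff_mem, mem_nilradical]

theorem IsHirano.isNilpotent_sub_pow_three_of_comm {a : R} (h : IsHirano a) :
    IsNilpotent (a - a ^ 3) := by
  obtain ⟨x, -, hx, hnil⟩ := h
  refine IsNilpotent.of_pow (m := 2) ?_
  rw [isNilpotent_iff_mk_nilradical_eq_zero] at hnil ⊢
  replace hx := congrArg (Ideal.Quotient.mk (nilradical R)) hx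
  simp only [map_sub, map_pow, map_mul] at hnil hx ⊢
  set A := Ideal.Quotient.mk (nilradical R) a
  set X := Ideal.Quotient.mk (nilradical R) x
  linear_combination (1 - 2 * (A ^ 2 + A * X) + A ^ 4 + A ^ 3 * X + A ^ 2 * X ^ 2) * hnil
    + (1 - A * X) * A * hx

theorem isHirano_of_isNilpotent_sub_pow_three_of_comm {a : R} (h : IsNilpotent (a - a ^ 3)) :
    IsHirano a := by
  set π := Ideal.Quotient.mk (nilradical R)
  have hker : ∀ z ∈ RingHom.ker π, IsNilpotent z := fun z hz =>
    mem_nilradical.mp (Ideal.mk_ker (I := nilradical R) ▸ hz)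
  rw [isNilpotent_iff_mk_nilradical_eq_zero, map_sub, map_pow] at h
  obtain ⟨p, hp, hpa⟩ := exists_isIdempotentElem_eq_of_ker_isNilpotent π hker (π a ^ 2)
    ⟨a ^ 2, map_pow π a 2⟩ (by unfold IsIdempotentElem; linear_combination -(π a) * h)
  -- `a + 1 - p` is its own inverse modulo nilpotents
  obtain ⟨u, hu⟩ : IsUnit (a + 1 - p) := by
    have hsq : IsNilpotent ((a + 1 - p) ^ 2 - 1) := by
      rw [isNilpotent_iff_mk_nilradical_eq_zero]
      simp only [map_sub, map_pow, map_add, map_one]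
      linear_combination (2 - π a) * h + (π p + π a ^ 2 - 2 - 2 * π a) * hpa
    simpa using hsq.isUnit_one_add
  have hinv : (u : R) * ↑u⁻¹ = 1 := u.mul_inv
  unfold IsIdempotentElem at hp
  have hax : a * (p * ↑u⁻¹) = p := by
    linear_combination p * hinv + (↑u⁻¹ : R) * hp - p * ↑u⁻¹ * hu
  refine ⟨p * ↑u⁻¹, mul_comm _ _, ?_, ?_⟩
  · linear_combination (-(p * ↑u⁻¹ : R)) * hax - (↑u⁻¹ : R) * hp
  · rw [hax, isNilpotent_iff_mk_nilradical_eq_zero, map_sub, map_pow, hpa, sub_self]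

theorem IsSDrazinInv.isNilpotent_sub_sq_of_comm {b y : R} (h : IsSDrazinInv b y) :
    IsNilpotent (b - b ^ 2) := by
  obtain ⟨-, hy, hnil⟩ := h
  rw [isNilpotent_iff_mk_nilradical_eq_zero] at hnil ⊢
  replace hy := congrArg (Ideal.Quotient.mk (nilradical R)) hy
  simp only [map_sub, map_pow, map_mul] at hnil hy ⊢
  set B := Ideal.Quotient.mk (nilradical R) b
  set Y := Ideal.Quotient.mk (nilradical R) y
  linear_combination (1 - B * Y - B) * hnil + B * hy

theorem Matrix.isNilpotent_of_isNilpotent_trace_of_isNilpotent_det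
    {X : Matrix (Fin 2) (Fin 2) R} (htr : IsNilpotent X.trace) (hdet : IsNilpotent X.det) :
    IsNilpotent X := by
  have hsq : X ^ 2 = algebraMap R _ X.trace * X - algebraMap R _ X.det := by
    ext i j
    fin_cases i <;> fin_cases j <;>
      simp only [Fin.isValue, sq, Matrix.mul_apply, Fin.sum_univ_two, Matrix.trace_fin_two,
        Matrix.det_fin_two, Matrix.sub_apply, Matrix.algebraMap_matrix_apply,
        Algebra.algebraMap_self, RingHom.id_apply, Fin.zero_eta, Fin.mk_one,
        ite_true, ite_false, one_ne_zero, zero_ne_one] <;> ring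
  refine IsNilpotent.of_pow (m := 2) ?_
  rw [hsq]
  exact Commute.isNilpotent_sub (Algebra.commutes _ _).symm
    ((Commute.isNilpotent_mul_right (Algebra.commutes _ X)) (htr.map _)) (hdet.map _)

theorem isNilpotent_antiTriangularDefect_of_comm {a d : R} (ha : IsNilpotent (a - a ^ 3))
    (hd : IsNilpotent (d - d ^ 2)) (had : IsNilpotent (a * d)) :
    IsNilpotent (antiTriangularDefect a d) := by
  rw [isNilpotent_iff_mk_nilradical_eq_zero] at ha hd had
  simp only [map_sub, map_pow, map_mul] at ha hd had
  apply Matrix.isNilpotent_of_isNilpotent_trace_of_isNilpotent_det <;>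
    simp only [antiTriangularDefect, Matrix.trace_fin_two_of, Matrix.det_fin_two_of,
      isNilpotent_iff_mk_nilradical_eq_zero, map_sub, map_pow, map_mul, map_add, map_neg, map_one]
  · linear_combination ha - 3 * had
  · linear_combination Ideal.Quotient.mk _ a * had + (Ideal.Quotient.mk _ d - 1) * hd

end CommRing

section Ring

open scoped IsMulCommutative

variable {A : Type*} [Ring A]

theorem isNilpotent_mul_comm {M : Type*} [MonoidWithZero M] {x y : M} :
    IsNilpotent (x * y) ↔ IsNilpotent (y * x) := by
  suffices ∀ x y : M, IsNilpotent (x * y) → IsNilpotent (y * x) from ⟨this x y, this y x⟩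
  rintro x y ⟨n, hn⟩
  exact ⟨n + 1, by rw [pow_succ, ← mul_assoc, mul_pow_mul, hn, mul_zero, zero_mul]⟩

theorem IsHirano.map {B : Type*} [Ring B] (f : A →+* B) {a : A} (h : IsHirano a) :
    IsHirano (f a) := by
  obtain ⟨x, hax, hx, hnil⟩ := h
  exact ⟨f x, by rw [← map_mul, hax, map_mul], by rw [← map_mul, ← map_mul, ← hx],
    by simpa using hnil.map f⟩

theorem Commute.isMulCommutative_closure {a b : A} (h : Commute a b) :
    IsMulCommutative (Subring.closure {a, b}) :=
  Subring.isMulCommutative_closure (by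
    simp only [Set.mem_insert_iff, Set.mem_singleton_iff]
    rintro x (rfl | rfl) y (rfl | rfl) <;> first | rfl | exact h.eq | exact h.symm.eq)

theorem isHirano_iff_isNilpotent_sub_pow_three {a : A} :
    IsHirano a ↔ IsNilpotent (a - a ^ 3) := by
  constructor
  · rintro ⟨x, hax, hx, hnil⟩
    have := Commute.isMulCommutative_closure hax
    let ι := (Subring.closure {a, x}).subtype
    let a' : Subring.closure {a, x} := ⟨a, Subring.subset_closure (by simp)⟩
    let x' : Subring.closure {a, x} := ⟨x, Subring.subset_closure (by simp)⟩
    have hS : IsHirano a' := ⟨x', mul_comm _ _, Subtype.ext hx,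
      (IsNilpotent.map_iff (f := ι) Subtype.val_injective).mp hnil⟩
    exact hS.isNilpotent_sub_pow_three_of_comm.map ι
  · intro h
    have := Subring.isMulCommutative_closure (s := {a}) (by simp)
    let ι := (Subring.closure {a}).subtype
    let a' : Subring.closure {a} := ⟨a, Subring.subset_closure rfl⟩
    have hS : IsNilpotent (a' - a' ^ 3) :=
      (IsNilpotent.map_iff (f := ι) Subtype.val_injective).mp h
    exact (isHirano_of_isNilpotent_sub_pow_three_of_comm hS).map ι

theorem IsSDrazinInv.isNilpotent_sub_sq {b y : A} (h : IsSDrazinInv b y) :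
    IsNilpotent (b - b ^ 2) := by
  obtain ⟨hby, hy, hnil⟩ := h
  have := Commute.isMulCommutative_closure hby
  let ι := (Subring.closure {b, y}).subtype
  let b' : Subring.closure {b, y} := ⟨b, Subring.subset_closure (by simp)⟩
  let y' : Subring.closure {b, y} := ⟨y, Subring.subset_closure (by simp)⟩
  have hS : IsSDrazinInv b' y' := ⟨mul_comm _ _, Subtype.ext hy,
    (IsNilpotent.map_iff (f := ι) Subtype.val_injective).mp hnil⟩
  exact hS.isNilpotent_sub_sq_of_comm.map ι

theorem IsSDrazinInv.isNilpotent_mul_of_mul_eq_zero {d y a : A} (h : IsSDrazinInv d y)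
    (had : Commute a d) (hya : y * a = 0) : IsNilpotent (a * d) := by
  obtain ⟨hdy, -, k, hk⟩ := h
  set n := d - d * y
  have hdn : Commute d n := (Commute.refl d).sub_right ((Commute.refl d).mul_right hdy)
  have hda : d * a = n * a := by simp only [n, sub_mul, mul_assoc, hya, mul_zero, sub_zero]
  have hpow : ∀ j : ℕ, d ^ j * a = n ^ j * a := by
    intro j
    induction j with
    | zero => simp only [pow_zero]
    | succ j ih =>
      rw [pow_succ', mul_assoc, ih, ← mul_assoc, (hdn.pow_right j).eq, mul_assoc, hda,
        ← mul_assoc, ← pow_succ]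
  refine ⟨k + 1, ?_⟩
  rw [had.eq, had.symm.mul_pow, pow_succ', pow_succ', mul_assoc, ← mul_assoc (d ^ k), hpow, hk,
    zero_mul, zero_mul, mul_zero]

theorem antiTriangularDefect_map {B : Type*} [Ring B] (f : A →+* B) (a d : A) :
    f.mapMatrix (antiTriangularDefect a d) = antiTriangularDefect (f a) (f d) := by
  ext i j
  fin_cases i <;> fin_cases j <;> simp [antiTriangularDefect]

theorem Commute.isNilpotent_antiTriangularDefect {a d : A} (h : Commute a d)
    (ha : IsNilpotent (a - a ^ 3)) (hd : IsNilpotent (d - d ^ 2)) (had : IsNilpotent (a * d)) :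
    IsNilpotent (antiTriangularDefect a d) := by
  have := h.isMulCommutative_closure
  let ι := (Subring.closure {a, d}).subtype
  have hι (z : Subring.closure {a, d}) : IsNilpotent (ι z) ↔ IsNilpotent z :=
    IsNilpotent.map_iff Subtype.val_injective
  let a' : Subring.closure {a, d} := ⟨a, Subring.subset_closure (by simp)⟩
  let d' : Subring.closure {a, d} := ⟨d, Subring.subset_closure (by simp)⟩
  have hS := isNilpotent_antiTriangularDefect_of_comm (a := a') (d := d') ((hι _).mp ha)
    ((hι _).mp hd) ((hι _).mp had)
  have hA := hS.map ι.mapMatrix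
  rw [antiTriangularDefect_map] at hA
  exact hA

theorem isNilpotent_antiTriangular_sub_pow_three_iff (a b c : A) :
    IsNilpotent (!![a, c; b, 0] - !![a, c; b, 0] ^ 3) ↔
      IsNilpotent (antiTriangularDefect a (c * b)) := by
  set N : Matrix (Fin 2) (Fin 2) A :=
    !![a - a ^ 3 - (a * (c * b) + c * b * a), (1 - a ^ 2 - c * b) * c; 1 - a ^ 2 - c * b, -(a * c)]
  have hfac : !![a, c; b, 0] - !![a, c; b, 0] ^ 3 = !![1, 0; 0, b] * N := by
    rw [pow_three, Matrix.mul_fin_two, Matrix.mul_fin_two, Matrix.mul_fin_two]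
    ext i j
    fin_cases i <;> fin_cases j <;>
      simp only [Fin.isValue, Fin.zero_eta, Fin.mk_one, Matrix.sub_apply, Matrix.of_apply,
        Matrix.cons_val', Matrix.cons_val_zero, Matrix.cons_val_one, Matrix.cons_val_fin_one] <;>
      noncomm_ring
  have hswap : N * !![1, 0; 0, b] = antiTriangularDefect a (c * b) := by
    rw [Matrix.mul_fin_two]
    ext i j
    fin_cases i <;> fin_cases j <;>
      simp only [antiTriangularDefect, Fin.isValue, Fin.zero_eta, Fin.mk_one, Matrix.of_apply,
        Matrix.cons_val', Matrix.cons_val_zero, Matrix.cons_val_one, Matrix.cons_val_fin_one] <;>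
      noncomm_ring
  rw [hfac, isNilpotent_mul_comm, hswap]

end Ring

theorem hirano_anti_triangular_cb_general {A : Type*} [NormedRing A]
    (a b c cbD : A) (ha : IsHirano a) (hcb : IsSDrazinInv (c * b) cbD)
    (h1 : a * c * b = c * b * a) (h2 : cbD * a = 0) :
    IsHirano (!![a, c; b, (0 : A)] : Matrix (Fin 2) (Fin 2) A) := by
  have had : Commute a (c * b) := (mul_assoc a c b).symm.trans h1
  rw [isHirano_iff_isNilpotent_sub_pow_three, isNilpotent_antiTriangular_sub_pow_three_iff]
  exact had.isNilpotent_antiTriangularDefect (isHirano_iff_isNilpotent_sub_pow_three.mp ha)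
    hcb.isNilpotent_sub_sq (hcb.isNilpotent_mul_of_mul_eq_zero had h2)

/-- If `a` is Hirano invertible, `c * b` is strongly Drazin invertible with strong
Drazin inverse `cbD`, `a * c * b = c * b * a` and `cbD * a = 0`, then
`!![a, c; b, 0]` is Hirano invertible in `M₂(A)`. -/
theorem hirano_anti_triangular_cb {A : Type*} [NormedRing A] [NormedAlgebra ℂ A]
    [CompleteSpace A] (a b c cbD : A) (ha : IsHirano a) (hcb : IsSDrazinInv (c * b) cbD)
    (h1 : a * c * b = c * b * a) (h2 : cbD * a = 0) :
    IsHirano (!![a, c; b, (0 : A)] : Matrix (Fin 2) (Fin 2) A) :=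
  hirano_anti_triangular_cb_general a b c cbD ha hcb h1 h2
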